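/- arXiv:1709.03354 — 9 statements merged into one kernel-verified Lean document; each statement's English description precedes it below -/
import Mathlib

section
/- Let G be a disconnected co-diamond-free finite simple graph. Then either every connected component of G is a clique, or G is the disjoint union of a complete multipartite graph and a single vertex. -/
/-- A disconnected co-diamond-free graph either has every connected component a
clique, or is the disjoint union of a complete multipartite graph and a single
(isolated) vertex. -/
theorem stmt_3 {V : Type*} (G : SimpleGraph V)
    (hdisc : ¬ G.Preconnected)
    (hcd : ¬ ∃ a b c d : V, a ≠ b ∧ a ≠ c ∧ a ≠ d ∧ b ≠ c ∧ b ≠ d ∧ c ≠ d ∧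
      G.Adj a b ∧ ¬ G.Adj a c ∧ ¬ G.Adj a d ∧ ¬ G.Adj b c ∧ ¬ G.Adj b d ∧ ¬ G.Adj c d) :
    (∀ u v : V, u ≠ v → G.Reachable u v → G.Adj u v) ∨
    (∃ w : V, (∀ u : V, ¬ G.Adj u w) ∧
      (∀ u v x : V, u ≠ w → v ≠ w → x ≠ w → u ≠ x →
        ¬ G.Adj u v → ¬ G.Adj v x → ¬ G.Adj u x)) := by
  by_cases h : ∀ u v : V, u ≠ v → G.Reachable u v → G.Adj u v
  · exact Or.inl h
  right
  push_neg at h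
  obtain ⟨u, v, huv, hr, hnadj⟩ := h
  rw [SimpleGraph.Preconnected] at hdisc
  push_neg at hdisc
  obtain ⟨p, q, hpq⟩ := hdisc
  have key : ∃ w, ¬ G.Reachable u w := by
    by_contra hc
    push_neg at hc
    exact hpq ((hc p).symm.trans (hc q))
  obtain ⟨w, hw⟩ := key
  have hwu : w ≠ u := fun e => hw (by rw [e])
  have hwv : w ≠ v := fun e => hw (e ▸ hr)
  have hiso : ∀ a : V, ¬ G.Adj a w := by
    intro a ha
    have hua : ¬ G.Reachable u a := fun h => hw (h.trans ha.reachable)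
    apply hcd
    refine ⟨a, w, u, v, ha.ne, ?_, ?_, hwu, hwv, huv, ha, ?_, ?_, ?_, ?_, hnadj⟩
    · exact fun e => hua (by rw [← e])
    · exact fun e => hua (e ▸ hr)
    · exact fun h2 => hua h2.symm.reachable
    · exact fun h2 => hua (hr.trans h2.symm.reachable)
    · exact fun h2 => hw h2.symm.reachable
    · exact fun h2 => hw (hr.trans h2.symm.reachable)
  refine ⟨w, hiso, ?_⟩
  intro a b c haw hbw hcw hac hab hbc hadj
  have hba : b ≠ a := fun e => hbc (by rw [e]; exact hadj)
  have hbc' : b ≠ c := fun e => hab (by rw [e]; exact hadj)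
  exact hcd ⟨a, c, b, w, hac, hba.symm, haw, hbc'.symm, hcw, hbw, hadj, hab,
    fun h2 => hiso a h2, fun h2 => hbc h2.symm, fun h2 => hiso c h2, fun h2 => hiso b h2⟩
end

section
/- If G is a disconnected co-diamond-free graph with at least two components each containing a path on 3 vertices, then a contradiction arises; equivalently, a co-diamond-free graph has at most one connected component that is not a clique. -/
/-! A non-clique component contains two distinct vertices joined by a walk of positive length,
hence an edge `x b`; a second non-clique component supplies two distinct non-adjacent vertices
`c d`. Vertices in different components are distinct and non-adjacent, so `x b` together with
`c`, `d` is an induced co-diamond. -/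

namespace SimpleGraph

variable {V : Type*} {G : SimpleGraph V} {u v p q : V}

lemma ne_of_not_reachable (huv : ¬ G.Reachable u v) (hp : G.Reachable u p)
    (hq : G.Reachable v q) : p ≠ q := by
  rintro rfl
  exact huv (hp.trans hq.symm)

lemma not_adj_of_not_reachable (huv : ¬ G.Reachable u v) (hp : G.Reachable u p)
    (hq : G.Reachable v q) : ¬ G.Adj p q :=
  fun hpq => huv (hp.trans (hpq.reachable.trans hq.symm))

end SimpleGraph

open SimpleGraph in
/-- A co-diamond-free graph has at most one connected component that is not a
clique: any two vertices whose components are non-cliques are in the same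
component. -/
theorem stmt_4 {V : Type*} (G : SimpleGraph V)
    (hcd : ¬ ∃ a b c d : V, a ≠ b ∧ a ≠ c ∧ a ≠ d ∧ b ≠ c ∧ b ≠ d ∧ c ≠ d ∧
      G.Adj a b ∧ ¬ G.Adj a c ∧ ¬ G.Adj a d ∧ ¬ G.Adj b c ∧ ¬ G.Adj b d ∧ ¬ G.Adj c d) :
    ∀ u v : V,
      (∃ x y : V, G.Reachable u x ∧ G.Reachable u y ∧ x ≠ y ∧ ¬ G.Adj x y) →
      (∃ x y : V, G.Reachable v x ∧ G.Reachable v y ∧ x ≠ y ∧ ¬ G.Adj x y) →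
      G.Reachable u v := by
  rintro u v ⟨c, d, huc, hud, hcd_ne, hcd_adj⟩ ⟨x, y, hvx, hvy, hxy, -⟩
  by_contra huv
  have hvu : ¬ G.Reachable v u := fun h => huv h.symm
  obtain ⟨b, hxb⟩ := (hvx.symm.trans hvy).nonempty_neighborSet_left hxy
  have hvb : G.Reachable v b := hvx.trans (Adj.reachable hxb)
  exact hcd ⟨x, b, c, d, hxb.ne, ne_of_not_reachable hvu hvx huc, ne_of_not_reachable hvu hvx hud,
    ne_of_not_reachable hvu hvb huc, ne_of_not_reachable hvu hvb hud, hcd_ne, hxb,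
    not_adj_of_not_reachable hvu hvx huc, not_adj_of_not_reachable hvu hvx hud,
    not_adj_of_not_reachable hvu hvb huc, not_adj_of_not_reachable hvu hvb hud, hcd_adj⟩
end

section
/- If a co-diamond-free graph G is disconnected and some component C is not a clique, then G has exactly two connected components. -/
/-- If a co-diamond-free graph is disconnected and the component of some vertex
`x₀` is not a clique, then `G` has exactly two connected components. -/
theorem stmt_5 {V : Type*} (G : SimpleGraph V)
    (hcd : ¬ ∃ a b c d : V, a ≠ b ∧ a ≠ c ∧ a ≠ d ∧ b ≠ c ∧ b ≠ d ∧ c ≠ d ∧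
      G.Adj a b ∧ ¬ G.Adj a c ∧ ¬ G.Adj a d ∧ ¬ G.Adj b c ∧ ¬ G.Adj b d ∧ ¬ G.Adj c d)
    (hdisc : ¬ G.Preconnected) (x₀ : V)
    (hx : ∃ y z : V, G.Reachable x₀ y ∧ G.Reachable x₀ z ∧ y ≠ z ∧ ¬ G.Adj y z) :
    ∃ c₁ c₂ : G.ConnectedComponent, c₁ ≠ c₂ ∧
      ∀ c : G.ConnectedComponent, c = c₁ ∨ c = c₂ := by
  obtain ⟨y, z, hy, hz, hyz, _⟩ := hx
  obtain ⟨p⟩ : G.Reachable y z := hy.symm.trans hz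
  obtain ⟨b, hadj⟩ : ∃ b, G.Adj y b := by
    cases p with
    | nil => exact absurd rfl hyz
    | cons h q => exact ⟨_, h⟩
  have hb : G.Reachable x₀ b := hy.trans hadj.reachable
  rw [SimpleGraph.Preconnected] at hdisc
  push_neg at hdisc
  obtain ⟨u, v, huv⟩ := hdisc
  obtain ⟨w, hw⟩ : ∃ w, ¬ G.Reachable x₀ w := by
    by_contra h; push_neg at h
    exact huv ((h u).symm.trans (h v))
  refine ⟨G.connectedComponentMk x₀, G.connectedComponentMk w, ?_, ?_⟩
  · intro h
    exact hw (SimpleGraph.ConnectedComponent.exact h)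
  · intro c
    induction c using SimpleGraph.ConnectedComponent.ind with
    | _ v =>
      by_cases h1 : G.Reachable x₀ v
      · exact Or.inl (SimpleGraph.ConnectedComponent.sound h1.symm)
      by_cases h2 : G.Reachable w v
      · exact Or.inr (SimpleGraph.ConnectedComponent.sound h2.symm)
      exfalso
      apply hcd
      refine ⟨y, b, v, w, hadj.ne, ?_, ?_, ?_, ?_, ?_, hadj, ?_, ?_, ?_, ?_, ?_⟩
      · rintro rfl; exact h1 hy
      · rintro rfl; exact hw hy
      · rintro rfl; exact h1 hb
      · rintro rfl; exact hw hb
      · rintro rfl; exact h2 (SimpleGraph.Reachable.refl _)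
      · intro h; exact h1 (hy.trans h.reachable)
      · intro h; exact hw (hy.trans h.reachable)
      · intro h; exact h1 (hb.trans h.reachable)
      · intro h; exact hw (hb.trans h.reachable)
      · intro h; exact h2 h.reachable.symm
end

section
/- If a co-diamond-free graph G is disconnected and some component is not a clique, then the other component consists of a single vertex (contains no edge). -/
/-- If a co-diamond-free graph is disconnected and the component of `x₀` is not
a clique, then every other component contains no edge (it is a single vertex). -/
theorem stmt_6 {V : Type*} (G : SimpleGraph V)
    (hcd : ¬ ∃ a b c d : V, a ≠ b ∧ a ≠ c ∧ a ≠ d ∧ b ≠ c ∧ b ≠ d ∧ c ≠ d ∧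
      G.Adj a b ∧ ¬ G.Adj a c ∧ ¬ G.Adj a d ∧ ¬ G.Adj b c ∧ ¬ G.Adj b d ∧ ¬ G.Adj c d)
    (hdisc : ¬ G.Preconnected) (x₀ : V)
    (hx : ∃ y z : V, G.Reachable x₀ y ∧ G.Reachable x₀ z ∧ y ≠ z ∧ ¬ G.Adj y z) :
    ∀ u v : V, ¬ G.Reachable u x₀ → ¬ G.Adj u v := by
  obtain ⟨y, z, hy, hz, hyz, hAyz⟩ := hx
  intro u v hu hAdj
  have hv : ¬ G.Reachable v x₀ := fun h => hu (hAdj.reachable.trans h)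
  -- any vertex reachable from x₀ is not adjacent to / equal to u or v
  have key : ∀ w, G.Reachable x₀ w → ∀ t, ¬ G.Reachable t x₀ → t ≠ w ∧ ¬ G.Adj t w := by
    intro w hw t ht
    constructor
    · rintro rfl; exact ht hw.symm
    · intro h; exact ht (h.reachable.trans hw.symm)
  obtain ⟨huy, hAuy⟩ := key y hy u hu
  obtain ⟨huz, hAuz⟩ := key z hz u hu
  obtain ⟨hvy, hAvy⟩ := key y hy v hv
  obtain ⟨hvz, hAvz⟩ := key z hz v hv
  exact hcd ⟨u, v, y, z, hAdj.ne, huy, huz, hvy, hvz, hyz, hAdj, hAuy, hAuz, hAvy, hAvz, hAyz⟩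
end

section
/- If G is a (claw, co-diamond)-free graph with independence number at least 4, then G has no edges (G is a stable set). -/
/-- If `a` belongs to an independent set `{a,b,c,d}` of size 4 in a
(claw, co-diamond)-free graph, then `a` is isolated. -/
lemma key_isolated {V : Type*} (G : SimpleGraph V)
    (hclaw : ¬ ∃ v a b c : V, a ≠ b ∧ a ≠ c ∧ b ≠ c ∧
      G.Adj v a ∧ G.Adj v b ∧ G.Adj v c ∧ ¬ G.Adj a b ∧ ¬ G.Adj a c ∧ ¬ G.Adj b c)
    (hcd : ¬ ∃ a b c d : V, a ≠ b ∧ a ≠ c ∧ a ≠ d ∧ b ≠ c ∧ b ≠ d ∧ c ≠ d ∧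
      G.Adj a b ∧ ¬ G.Adj a c ∧ ¬ G.Adj a d ∧ ¬ G.Adj b c ∧ ¬ G.Adj b d ∧ ¬ G.Adj c d)
    {a b c d : V} (hab : a ≠ b) (hac : a ≠ c) (had : a ≠ d) (hbc : b ≠ c)
    (hbd : b ≠ d) (hcd' : c ≠ d)
    (nab : ¬ G.Adj a b) (nac : ¬ G.Adj a c) (nad : ¬ G.Adj a d)
    (nbc : ¬ G.Adj b c) (nbd : ¬ G.Adj b d) (ncd : ¬ G.Adj c d) :
    ∀ v : V, ¬ G.Adj a v := by
  intro v hav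
  have hva := hav.symm
  have vb : v ≠ b := fun h => nab (h ▸ hav)
  have vc : v ≠ c := fun h => nac (h ▸ hav)
  have vd : v ≠ d := fun h => nad (h ▸ hav)
  have h1 : G.Adj v b ∨ G.Adj v c := by
    by_contra h; push_neg at h
    exact hcd ⟨a, v, b, c, hav.ne, hab, hac, vb, vc, hbc, hav, nab, nac, h.1, h.2, nbc⟩
  have h2 : G.Adj v b ∨ G.Adj v d := by
    by_contra h; push_neg at h
    exact hcd ⟨a, v, b, d, hav.ne, hab, had, vb, vd, hbd, hav, nab, nad, h.1, h.2, nbd⟩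
  have h3 : G.Adj v c ∨ G.Adj v d := by
    by_contra h; push_neg at h
    exact hcd ⟨a, v, c, d, hav.ne, hac, had, vc, vd, hcd', hav, nac, nad, h.1, h.2, ncd⟩
  rcases h1 with h1 | h1 <;> rcases h2 with h2 | h2 <;> rcases h3 with h3 | h3 <;>
    first
    | exact hclaw ⟨v, a, b, c, hab, hac, hbc, hva, ‹G.Adj v b›, ‹G.Adj v c›, nab, nac, nbc⟩
    | exact hclaw ⟨v, a, b, d, hab, had, hbd, hva, ‹G.Adj v b›, ‹G.Adj v d›, nab, nad, nbd⟩
    | exact hclaw ⟨v, a, c, d, hac, had, hcd', hva, ‹G.Adj v c›, ‹G.Adj v d›, nac, nad, ncd⟩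

/-- A (claw, co-diamond)-free graph with independence number at least 4 has no
edges. -/
theorem stmt_8 {V : Type*} (G : SimpleGraph V)
    (hclaw : ¬ ∃ v a b c : V, a ≠ b ∧ a ≠ c ∧ b ≠ c ∧
      G.Adj v a ∧ G.Adj v b ∧ G.Adj v c ∧ ¬ G.Adj a b ∧ ¬ G.Adj a c ∧ ¬ G.Adj b c)
    (hcd : ¬ ∃ a b c d : V, a ≠ b ∧ a ≠ c ∧ a ≠ d ∧ b ≠ c ∧ b ≠ d ∧ c ≠ d ∧
      G.Adj a b ∧ ¬ G.Adj a c ∧ ¬ G.Adj a d ∧ ¬ G.Adj b c ∧ ¬ G.Adj b d ∧ ¬ G.Adj c d)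
    (halpha : ∃ a b c d : V, a ≠ b ∧ a ≠ c ∧ a ≠ d ∧ b ≠ c ∧ b ≠ d ∧ c ≠ d ∧
      ¬ G.Adj a b ∧ ¬ G.Adj a c ∧ ¬ G.Adj a d ∧ ¬ G.Adj b c ∧ ¬ G.Adj b d ∧ ¬ G.Adj c d) :
    ∀ u v : V, ¬ G.Adj u v := by
  obtain ⟨a, b, c, d, hab, hac, had, hbc, hbd, hcd', nab, nac, nad, nbc, nbd, ncd⟩ := halpha
  intro u v huv
  have ic : ∀ t, ¬ G.Adj c t :=
    key_isolated G hclaw hcd hac.symm hbc.symm hcd' hab had hbd (fun h => nac h.symm) (fun h => nbc h.symm) ncd nab nad nbd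
  have id : ∀ t, ¬ G.Adj d t :=
    key_isolated G hclaw hcd had.symm hbd.symm hcd'.symm hab hac hbc
      (fun h => nad h.symm) (fun h => nbd h.symm) (fun h => ncd h.symm) nab nac nbc
  have uc : u ≠ c := fun h => ic v (h ▸ huv)
  have ud : u ≠ d := fun h => id v (h ▸ huv)
  have vc : v ≠ c := fun h => ic u (h ▸ huv.symm)
  have vd : v ≠ d := fun h => id u (h ▸ huv.symm)
  exact hcd ⟨u, v, c, d, huv.ne, uc, ud, vc, vd, hcd', huv,
    (fun h => ic u h.symm), (fun h => id u h.symm),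
    (fun h => ic v h.symm), (fun h => id v h.symm), ncd⟩
end

section
/- Let G be a (claw, co-diamond)-free graph and S a maximal stable set in G with |S| ≥ 4. Then every vertex of G lies in S. -/
/-- In a (claw, co-diamond)-free graph, a maximal stable set of size at least 4
contains every vertex. -/
theorem stmt_9 {V : Type*} [DecidableEq V] (G : SimpleGraph V)
    (hclaw : ¬ ∃ v a b c : V, a ≠ b ∧ a ≠ c ∧ b ≠ c ∧
      G.Adj v a ∧ G.Adj v b ∧ G.Adj v c ∧ ¬ G.Adj a b ∧ ¬ G.Adj a c ∧ ¬ G.Adj b c)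
    (hcd : ¬ ∃ a b c d : V, a ≠ b ∧ a ≠ c ∧ a ≠ d ∧ b ≠ c ∧ b ≠ d ∧ c ≠ d ∧
      G.Adj a b ∧ ¬ G.Adj a c ∧ ¬ G.Adj a d ∧ ¬ G.Adj b c ∧ ¬ G.Adj b d ∧ ¬ G.Adj c d)
    (S : Finset V)
    (hstable : ∀ x ∈ S, ∀ y ∈ S, x ≠ y → ¬ G.Adj x y)
    (hmax : ∀ T : Finset V, (∀ x ∈ T, ∀ y ∈ T, x ≠ y → ¬ G.Adj x y) → S ⊆ T → T = S)
    (hcard : 4 ≤ S.card) :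
    ∀ v : V, v ∈ S := by
  classical
  intro v
  by_contra hv
  -- v has a neighbor in S, else insert v S is stable
  set N : Finset V := S.filter (fun x => G.Adj v x) with hN
  have hNsub : N ⊆ S := Finset.filter_subset _ _
  have hNne : N.Nonempty := by
    by_contra hne
    rw [Finset.not_nonempty_iff_eq_empty, Finset.filter_eq_empty_iff] at hne
    have hstable' : ∀ x ∈ insert v S, ∀ y ∈ insert v S, x ≠ y → ¬ G.Adj x y := by
      intro x hx y hy hxy
      rcases Finset.mem_insert.mp hx with rfl | hxS
      · rcases Finset.mem_insert.mp hy with rfl | hyS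
        · exact absurd rfl hxy
        · exact hne hyS
      · rcases Finset.mem_insert.mp hy with rfl | hyS
        · intro h; exact hne hxS h.symm
        · exact hstable x hxS y hyS hxy
    have := hmax _ hstable' (Finset.subset_insert _ _)
    exact hv (this ▸ Finset.mem_insert_self v S)
  by_cases h3 : 3 ≤ N.card
  · -- claw
    obtain ⟨t, hts, ht3⟩ := Finset.exists_subset_card_eq h3
    obtain ⟨a, b, c, hab, hac, hbc, rfl⟩ := Finset.card_eq_three.mp ht3
    have ha := hts (show a ∈ ({a,b,c} : Finset V) by simp)
    have hb := hts (show b ∈ ({a,b,c} : Finset V) by simp)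
    have hc := hts (show c ∈ ({a,b,c} : Finset V) by simp)
    rw [hN, Finset.mem_filter] at ha hb hc
    exact hclaw ⟨v, a, b, c, hab, hac, hbc, ha.2, hb.2, hc.2,
      hstable a ha.1 b hb.1 hab, hstable a ha.1 c hc.1 hac,
      hstable b hb.1 c hc.1 hbc⟩
  · -- co-diamond
    have h2 : 2 ≤ (S \ N).card := by
      rw [Finset.card_sdiff_of_subset hNsub]
      omega
    obtain ⟨c, hc, d, hd, hcd'⟩ := Finset.one_lt_card.mp h2
    obtain ⟨b, hb⟩ := hNne
    rw [hN, Finset.mem_filter] at hb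
    rw [Finset.mem_sdiff] at hc hd
    have hvc : ¬ G.Adj v c := fun h => hc.2 (Finset.mem_filter.mpr ⟨hc.1, h⟩)
    have hvd : ¬ G.Adj v d := fun h => hd.2 (Finset.mem_filter.mpr ⟨hd.1, h⟩)
    have hbc : b ≠ c := fun h => hc.2 (h ▸ Finset.mem_filter.mpr hb)
    have hbd : b ≠ d := fun h => hd.2 (h ▸ Finset.mem_filter.mpr hb)
    exact hcd ⟨v, b, c, d, hb.2.ne, (fun h => hv (h ▸ hc.1)), (fun h => hv (h ▸ hd.1)),
      hbc, hbd, hcd', hb.2, hvc, hvd,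
      hstable b hb.1 c hc.1 hbc, hstable b hb.1 d hd.1 hbd,
      hstable c hc.1 d hd.1 hcd'⟩
end

section
/- Let G be a peculiar (claw, co-diamond, 2K_2)-free graph with co-triangle {a,b,c} and sets S_{a,b}, S_{b,c}, S_{a,c}. Then every vertex of S_{a,b} is adjacent to every vertex of S_{b,c} (and similarly for the other pairs of sets). -/
/-! If `u ∈ S_{x,y}` and `v ∈ S_{y,z}` were non-adjacent, the edges `xu` and `vz` would form an
induced `2K₂`: `x, z` lie in the stable set, `u` misses `z` and `v` misses `x` because no vertex
outside `{a, b, c}` sees all three of them, and the same fact gives `u ≠ v`. -/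

theorem Set.triple_eq_of_mem_of_ne {α : Type*} {a b c x y z : α}
    (hx : x ∈ ({a, b, c} : Set α)) (hy : y ∈ ({a, b, c} : Set α)) (hz : z ∈ ({a, b, c} : Set α))
    (hxy : x ≠ y) (hyz : y ≠ z) (hxz : x ≠ z) :
    ({x, y, z} : Set α) = {a, b, c} := by
  simp only [Set.mem_insert_iff, Set.mem_singleton_iff] at hx hy hz
  rcases hx with rfl | rfl | rfl <;> rcases hy with rfl | rfl | rfl <;>
    rcases hz with rfl | rfl | rfl <;>
    first
    | contradiction
    | rfl
    | ext; simp only [Set.mem_insert_iff, Set.mem_singleton_iff]; tauto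

namespace SimpleGraph

variable {V : Type*} {G : SimpleGraph V} {a b c x y z v : V}

theorem not_adj_of_adj_of_adj (hv : ¬ (G.Adj v a ∧ G.Adj v b ∧ G.Adj v c))
    (hx : x ∈ ({a, b, c} : Set V)) (hy : y ∈ ({a, b, c} : Set V)) (hz : z ∈ ({a, b, c} : Set V))
    (hxy : x ≠ y) (hyz : y ≠ z) (hxz : x ≠ z) (hvx : G.Adj v x) (hvy : G.Adj v y) :
    ¬ G.Adj v z := by
  intro hvz
  have hall : ∀ w ∈ ({a, b, c} : Set V), G.Adj v w := by
    rw [← Set.triple_eq_of_mem_of_ne hx hy hz hxy hyz hxz]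
    simp [hvx, hvy, hvz]
  exact hv ⟨hall a (by simp), hall b (by simp), hall c (by simp)⟩

end SimpleGraph

open SimpleGraph in
theorem stmt_12_general {V : Type*} (G : SimpleGraph V)
    (a b c : V)
    (hnab : ¬ G.Adj a b) (hnac : ¬ G.Adj a c) (hnbc : ¬ G.Adj b c)
    (htwo : ∀ v : V, v ∉ ({a, b, c} : Set V) →
      ((G.Adj v a ∧ G.Adj v b ∧ ¬ G.Adj v c) ∨
       (G.Adj v a ∧ ¬ G.Adj v b ∧ G.Adj v c) ∨
       (¬ G.Adj v a ∧ G.Adj v b ∧ G.Adj v c)))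
    (h2K2 : ¬ ∃ w x y z : V, w ≠ x ∧ w ≠ y ∧ w ≠ z ∧ x ≠ y ∧ x ≠ z ∧ y ≠ z ∧
      G.Adj w x ∧ G.Adj y z ∧ ¬ G.Adj w y ∧ ¬ G.Adj w z ∧ ¬ G.Adj x y ∧ ¬ G.Adj x z) :
    ∀ x y z : V, x ∈ ({a, b, c} : Set V) → y ∈ ({a, b, c} : Set V) →
      z ∈ ({a, b, c} : Set V) → x ≠ y → y ≠ z → x ≠ z →
      ∀ u v : V, u ∉ ({a, b, c} : Set V) → v ∉ ({a, b, c} : Set V) →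
        G.Adj u x → G.Adj u y → G.Adj v y → G.Adj v z → G.Adj u v := by
  intro x y z hx hy hz hxy hyz hxz u v hu hv hux huy hvy hvz
  by_contra huv
  have hindep : G.IsIndepSet {a, b, c} := by
    simp [isIndepSet_iff, Set.pairwise_insert, hnab, hnac, hnbc, adj_comm]
  have hnot_all : ∀ w ∉ ({a, b, c} : Set V), ¬ (G.Adj w a ∧ G.Adj w b ∧ G.Adj w c) := by
    intro w hw
    have := htwo w hw
    tauto
  have hnuz : ¬ G.Adj u z := not_adj_of_adj_of_adj (hnot_all u hu) hx hy hz hxy hyz hxz hux huy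
  have hnvx : ¬ G.Adj v x :=
    not_adj_of_adj_of_adj (hnot_all v hv) hz hy hx hyz.symm hxy.symm hxz.symm hvz hvy
  exact h2K2 ⟨x, u, v, z, fun h => hu (h ▸ hx), fun h => hv (h ▸ hx), hxz,
    fun h => hnuz (h ▸ hvz), fun h => hu (h ▸ hz), fun h => hv (h ▸ hz), hux.symm, hvz,
    fun h => hnvx h.symm, hindep hx hz hxz, huv, hnuz⟩

/-- In a peculiar (claw, co-diamond, 2K₂)-free graph, every vertex of
`S_{x,y}` is adjacent to every vertex of `S_{y,z}`, for distinct co-triangle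
vertices `x, y, z`. -/
theorem stmt_12 {V : Type*} (G : SimpleGraph V)
    (hconn : G.Connected)
    (hclaw : ¬ ∃ v x y z : V, x ≠ y ∧ x ≠ z ∧ y ≠ z ∧
      G.Adj v x ∧ G.Adj v y ∧ G.Adj v z ∧ ¬ G.Adj x y ∧ ¬ G.Adj x z ∧ ¬ G.Adj y z)
    (hcd : ¬ ∃ w x y z : V, w ≠ x ∧ w ≠ y ∧ w ≠ z ∧ x ≠ y ∧ x ≠ z ∧ y ≠ z ∧
      G.Adj w x ∧ ¬ G.Adj w y ∧ ¬ G.Adj w z ∧ ¬ G.Adj x y ∧ ¬ G.Adj x z ∧ ¬ G.Adj y z)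
    (a b c : V) (hab : a ≠ b) (hac : a ≠ c) (hbc : b ≠ c)
    (hnab : ¬ G.Adj a b) (hnac : ¬ G.Adj a c) (hnbc : ¬ G.Adj b c)
    (htwo : ∀ v : V, v ∉ ({a, b, c} : Set V) →
      ((G.Adj v a ∧ G.Adj v b ∧ ¬ G.Adj v c) ∨
       (G.Adj v a ∧ ¬ G.Adj v b ∧ G.Adj v c) ∨
       (¬ G.Adj v a ∧ G.Adj v b ∧ G.Adj v c)))
    (h2K2 : ¬ ∃ w x y z : V, w ≠ x ∧ w ≠ y ∧ w ≠ z ∧ x ≠ y ∧ x ≠ z ∧ y ≠ z ∧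
      G.Adj w x ∧ G.Adj y z ∧ ¬ G.Adj w y ∧ ¬ G.Adj w z ∧ ¬ G.Adj x y ∧ ¬ G.Adj x z) :
    ∀ x y z : V, x ∈ ({a, b, c} : Set V) → y ∈ ({a, b, c} : Set V) →
      z ∈ ({a, b, c} : Set V) → x ≠ y → y ≠ z → x ≠ z →
      ∀ u v : V, u ∉ ({a, b, c} : Set V) → v ∉ ({a, b, c} : Set V) →
        G.Adj u x → G.Adj u y → G.Adj v y → G.Adj v z → G.Adj u v :=
  stmt_12_general G a b c hnab hnac hnbc htwo h2K2
end

section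
/- Let G be a peculiar (claw, co-diamond, 2K_2)-free graph in which at least two of the sets S_{a,b}, S_{b,c}, S_{a,c} are nonempty. Then each S_{x,y} induces a clique, i.e., G is a generalized pyramid. -/
private lemma notA {A B C : Prop} (h : (A ∧ B ∧ ¬C) ∨ (A ∧ ¬B ∧ C) ∨ (¬A ∧ B ∧ C))
    (hb : B) (hc : C) : ¬A := by tauto
private lemma notB {A B C : Prop} (h : (A ∧ B ∧ ¬C) ∨ (A ∧ ¬B ∧ C) ∨ (¬A ∧ B ∧ C))
    (ha : A) (hc : C) : ¬B := by tauto
private lemma notC {A B C : Prop} (h : (A ∧ B ∧ ¬C) ∨ (A ∧ ¬B ∧ C) ∨ (¬A ∧ B ∧ C))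
    (ha : A) (hb : B) : ¬C := by tauto
private lemma oneA {A B C : Prop} (h : (A ∧ B ∧ ¬C) ∨ (A ∧ ¬B ∧ C) ∨ (¬A ∧ B ∧ C))
    (ha : A) : (B ∧ ¬C) ∨ (C ∧ ¬B) := by tauto
private lemma oneB {A B C : Prop} (h : (A ∧ B ∧ ¬C) ∨ (A ∧ ¬B ∧ C) ∨ (¬A ∧ B ∧ C))
    (hb : B) : (A ∧ ¬C) ∨ (C ∧ ¬A) := by tauto
private lemma oneC {A B C : Prop} (h : (A ∧ B ∧ ¬C) ∨ (A ∧ ¬B ∧ C) ∨ (¬A ∧ B ∧ C))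
    (hc : C) : (A ∧ ¬B) ∨ (B ∧ ¬A) := by tauto

private lemma core2 {V : Type*} {G : SimpleGraph V}
    (h2K2 : ¬ ∃ w x y z : V, w ≠ x ∧ w ≠ y ∧ w ≠ z ∧ x ≠ y ∧ x ≠ z ∧ y ≠ z ∧
      G.Adj w x ∧ G.Adj y z ∧ ¬ G.Adj w y ∧ ¬ G.Adj w z ∧ ¬ G.Adj x y ∧ ¬ G.Adj x z)
    {x z u v : V} (hux : G.Adj u x) (hunz : ¬ G.Adj u z)
    (hvz : G.Adj v z) (hvnx : ¬ G.Adj v x) (hxz : ¬ G.Adj x z) :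
    G.Adj u v := by
  by_contra hnuv
  exact h2K2 ⟨u, x, v, z, hux.ne, (fun h => hunz (h.symm ▸ hvz)),
    (fun h => hxz (h ▸ hux).symm), (fun h => hxz (h.symm ▸ hvz)),
    (fun h => hunz (h ▸ hux)), hvz.ne,
    hux, hvz, hnuv, hunz, (fun h => hvnx h.symm), hxz⟩

private lemma core1 {V : Type*} {G : SimpleGraph V}
    (hclaw : ¬ ∃ v x y z : V, x ≠ y ∧ x ≠ z ∧ y ≠ z ∧
      G.Adj v x ∧ G.Adj v y ∧ G.Adj v z ∧ ¬ G.Adj x y ∧ ¬ G.Adj x z ∧ ¬ G.Adj y z)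
    (h2K2 : ¬ ∃ w x y z : V, w ≠ x ∧ w ≠ y ∧ w ≠ z ∧ x ≠ y ∧ x ≠ z ∧ y ≠ z ∧
      G.Adj w x ∧ G.Adj y z ∧ ¬ G.Adj w y ∧ ¬ G.Adj w z ∧ ¬ G.Adj x y ∧ ¬ G.Adj x z)
    {x y z u v w : V}
    (hxz : ¬ G.Adj x z) (hyz : ¬ G.Adj y z)
    (hux : G.Adj u x) (huy : G.Adj u y) (hunz : ¬ G.Adj u z)
    (hvx : G.Adj v x) (hvy : G.Adj v y) (hvnz : ¬ G.Adj v z)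
    (hwz : G.Adj w z)
    (hw : (G.Adj w x ∧ ¬ G.Adj w y) ∨ (G.Adj w y ∧ ¬ G.Adj w x))
    (huv : u ≠ v) : G.Adj u v := by
  by_contra hnuv
  by_cases hwu : G.Adj w u
  · by_cases hwv : G.Adj w v
    · -- claw centered at w with leaves u, v, z
      exact hclaw ⟨w, u, v, z, huv, (fun h => hxz (h ▸ hux).symm),
        (fun h => hxz (h ▸ hvx).symm), hwu, hwv, hwz, hnuv, hunz, hvnz⟩
    · rcases hw with ⟨hwx, hwy⟩ | ⟨hwy, hwx⟩
      · -- 2K2 on edges w-z and v-y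
        exact h2K2 ⟨w, z, v, y, hwz.ne, (fun h => hvnz (h ▸ hwz)),
          (fun h => hyz (h ▸ hwz)), (fun h => hyz (h.symm ▸ hvy).symm),
          (fun h => hwy (h ▸ hwz)), hvy.ne,
          hwz, hvy, hwv, hwy, (fun h => hvnz h.symm), (fun h => hyz h.symm)⟩
      · -- 2K2 on edges w-z and v-x
        exact h2K2 ⟨w, z, v, x, hwz.ne, (fun h => hvnz (h ▸ hwz)),
          (fun h => hxz (h ▸ hwz)), (fun h => hxz (h.symm ▸ hvx).symm),
          (fun h => hwx (h ▸ hwz)), hvx.ne,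
          hwz, hvx, hwv, hwx, (fun h => hvnz h.symm), (fun h => hxz h.symm)⟩
  · rcases hw with ⟨hwx, hwy⟩ | ⟨hwy, hwx⟩
    · -- 2K2 on edges w-z and u-y
      exact h2K2 ⟨w, z, u, y, hwz.ne, (fun h => hunz (h ▸ hwz)),
        (fun h => hyz (h ▸ hwz)), (fun h => hyz (h.symm ▸ huy).symm),
        (fun h => hwy (h ▸ hwz)), huy.ne,
        hwz, huy, hwu, hwy, (fun h => hunz h.symm), (fun h => hyz h.symm)⟩
    · -- 2K2 on edges w-z and u-x
      exact h2K2 ⟨w, z, u, x, hwz.ne, (fun h => hunz (h ▸ hwz)),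
        (fun h => hxz (h ▸ hwz)), (fun h => hxz (h.symm ▸ hux).symm),
        (fun h => hwx (h ▸ hwz)), hux.ne,
        hwz, hux, hwu, hwx, (fun h => hunz h.symm), (fun h => hxz h.symm)⟩

/-- A peculiar (claw, co-diamond, 2K₂)-free graph in which at least two of the
sets `S_{a,b}`, `S_{b,c}`, `S_{a,c}` are nonempty is a generalized pyramid:
each `S_{x,y}` is a clique and all edges between distinct such sets are
present. -/
theorem stmt_13 {V : Type*} (G : SimpleGraph V)
    (hconn : G.Connected)
    (hclaw : ¬ ∃ v x y z : V, x ≠ y ∧ x ≠ z ∧ y ≠ z ∧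
      G.Adj v x ∧ G.Adj v y ∧ G.Adj v z ∧ ¬ G.Adj x y ∧ ¬ G.Adj x z ∧ ¬ G.Adj y z)
    (hcd : ¬ ∃ w x y z : V, w ≠ x ∧ w ≠ y ∧ w ≠ z ∧ x ≠ y ∧ x ≠ z ∧ y ≠ z ∧
      G.Adj w x ∧ ¬ G.Adj w y ∧ ¬ G.Adj w z ∧ ¬ G.Adj x y ∧ ¬ G.Adj x z ∧ ¬ G.Adj y z)
    (a b c : V) (hab : a ≠ b) (hac : a ≠ c) (hbc : b ≠ c)
    (hnab : ¬ G.Adj a b) (hnac : ¬ G.Adj a c) (hnbc : ¬ G.Adj b c)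
    (htwo : ∀ v : V, v ∉ ({a, b, c} : Set V) →
      ((G.Adj v a ∧ G.Adj v b ∧ ¬ G.Adj v c) ∨
       (G.Adj v a ∧ ¬ G.Adj v b ∧ G.Adj v c) ∨
       (¬ G.Adj v a ∧ G.Adj v b ∧ G.Adj v c)))
    (h2K2 : ¬ ∃ w x y z : V, w ≠ x ∧ w ≠ y ∧ w ≠ z ∧ x ≠ y ∧ x ≠ z ∧ y ≠ z ∧
      G.Adj w x ∧ G.Adj y z ∧ ¬ G.Adj w y ∧ ¬ G.Adj w z ∧ ¬ G.Adj x y ∧ ¬ G.Adj x z)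
    (hne : ((∃ u, u ∉ ({a, b, c} : Set V) ∧ G.Adj u a ∧ G.Adj u b) ∧
            (∃ u, u ∉ ({a, b, c} : Set V) ∧ G.Adj u b ∧ G.Adj u c)) ∨
           ((∃ u, u ∉ ({a, b, c} : Set V) ∧ G.Adj u a ∧ G.Adj u b) ∧
            (∃ u, u ∉ ({a, b, c} : Set V) ∧ G.Adj u a ∧ G.Adj u c)) ∨
           ((∃ u, u ∉ ({a, b, c} : Set V) ∧ G.Adj u b ∧ G.Adj u c) ∧
            (∃ u, u ∉ ({a, b, c} : Set V) ∧ G.Adj u a ∧ G.Adj u c))) :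
    (∀ x y : V, x ∈ ({a, b, c} : Set V) → y ∈ ({a, b, c} : Set V) → x ≠ y →
      ∀ u v : V, u ∉ ({a, b, c} : Set V) → v ∉ ({a, b, c} : Set V) →
        G.Adj u x → G.Adj u y → G.Adj v x → G.Adj v y → u ≠ v → G.Adj u v) ∧
    (∀ x y z : V, x ∈ ({a, b, c} : Set V) → y ∈ ({a, b, c} : Set V) →
      z ∈ ({a, b, c} : Set V) → x ≠ y → y ≠ z → x ≠ z →
      ∀ u v : V, u ∉ ({a, b, c} : Set V) → v ∉ ({a, b, c} : Set V) →
        G.Adj u x → G.Adj u y → G.Adj v y → G.Adj v z → G.Adj u v) := by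
  have hnba : ¬ G.Adj b a := fun h => hnab h.symm
  have hnca : ¬ G.Adj c a := fun h => hnac h.symm
  have hncb : ¬ G.Adj c b := fun h => hnbc h.symm
  -- each of a, b, c has a neighbor outside {a,b,c}
  have hWa : ∃ w, w ∉ ({a, b, c} : Set V) ∧ G.Adj w a := by
    rcases hne with ⟨⟨u, hu, h1, _⟩, _⟩ | ⟨⟨u, hu, h1, _⟩, _⟩ | ⟨_, ⟨u, hu, h1, _⟩⟩ <;>
      exact ⟨u, hu, h1⟩
  have hWb : ∃ w, w ∉ ({a, b, c} : Set V) ∧ G.Adj w b := by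
    rcases hne with ⟨⟨u, hu, _, h2⟩, _⟩ | ⟨⟨u, hu, _, h2⟩, _⟩ | ⟨⟨u, hu, h2, _⟩, _⟩ <;>
      exact ⟨u, hu, h2⟩
  have hWc : ∃ w, w ∉ ({a, b, c} : Set V) ∧ G.Adj w c := by
    rcases hne with ⟨_, ⟨u, hu, _, h2⟩⟩ | ⟨_, ⟨u, hu, _, h2⟩⟩ | ⟨_, ⟨u, hu, _, h2⟩⟩ <;>
      exact ⟨u, hu, h2⟩
  constructor
  · intro x y hx hy hxy u v hu hv hux huy hvx hvy huv
    simp only [Set.mem_insert_iff, Set.mem_singleton_iff] at hx hy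
    have hu2 := htwo u hu
    have hv2 := htwo v hv
    rcases hx with rfl | rfl | rfl <;> rcases hy with rfl | rfl | rfl
    · exact absurd rfl hxy
    · -- x = a, y = b, z = c
      obtain ⟨w, hwm, hwz⟩ := hWc
      exact core1 hclaw h2K2 hnac hnbc hux huy (notC hu2 hux huy)
        hvx hvy (notC hv2 hvx hvy) hwz (oneC (htwo w hwm) hwz) huv
    · -- x = a, y = c, z = b
      obtain ⟨w, hwm, hwz⟩ := hWb
      exact core1 hclaw h2K2 hnab hncb hux huy (notB hu2 hux huy)
        hvx hvy (notB hv2 hvx hvy) hwz (oneB (htwo w hwm) hwz) huv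
    · -- x = b, y = a, z = c
      obtain ⟨w, hwm, hwz⟩ := hWc
      exact core1 hclaw h2K2 hnbc hnac hux huy (notC hu2 huy hux)
        hvx hvy (notC hv2 hvy hvx) hwz (Or.symm (oneC (htwo w hwm) hwz)) huv
    · exact absurd rfl hxy
    · -- x = b, y = c, z = a
      obtain ⟨w, hwm, hwz⟩ := hWa
      exact core1 hclaw h2K2 hnba hnca hux huy (notA hu2 hux huy)
        hvx hvy (notA hv2 hvx hvy) hwz (oneA (htwo w hwm) hwz) huv
    · -- x = c, y = a, z = b
      obtain ⟨w, hwm, hwz⟩ := hWb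
      exact core1 hclaw h2K2 hncb hnab hux huy (notB hu2 huy hux)
        hvx hvy (notB hv2 hvy hvx) hwz (Or.symm (oneB (htwo w hwm) hwz)) huv
    · -- x = c, y = b, z = a
      obtain ⟨w, hwm, hwz⟩ := hWa
      exact core1 hclaw h2K2 hnca hnba hux huy (notA hu2 huy hux)
        hvx hvy (notA hv2 hvy hvx) hwz (Or.symm (oneA (htwo w hwm) hwz)) huv
    · exact absurd rfl hxy
  · intro x y z hx hy hz hxy hyz hxz u v hu hv hux huy hvy hvz
    simp only [Set.mem_insert_iff, Set.mem_singleton_iff] at hx hy hz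
    have hu2 := htwo u hu
    have hv2 := htwo v hv
    rcases hx with rfl | rfl | rfl <;> rcases hy with rfl | rfl | rfl <;>
      rcases hz with rfl | rfl | rfl <;>
      first
        | exact absurd rfl hxy
        | exact absurd rfl hyz
        | exact absurd rfl hxz
        | exact core2 h2K2 hux (notC hu2 hux huy) hvz (notA hv2 hvy hvz) hnac
        | exact core2 h2K2 hux (notB hu2 hux huy) hvz (notA hv2 hvz hvy) hnab
        | exact core2 h2K2 hux (notC hu2 huy hux) hvz (notB hv2 hvy hvz) hnbc
        | exact core2 h2K2 hux (notA hu2 hux huy) hvz (notB hv2 hvz hvy) hnba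
        | exact core2 h2K2 hux (notB hu2 huy hux) hvz (notC hv2 hvy hvz) hncb
        | exact core2 h2K2 hux (notA hu2 huy hux) hvz (notC hv2 hvz hvy) hnca
end

section
/- In a peculiar (claw, co-diamond, K_4)-free graph, each set S_{x,y} contains neither a triangle nor a stable set of size 3; consequently |S_{x,y}| ≤ 5 and the whole graph has at most 18 vertices. -/
/-!
Every vertex of a peculiar graph other than `a, b, c` lies in the neighbourhood of `a` or of `b`,
and each `S_{x,y}` lies in the neighbourhood of `x`. In a claw-free, `K₄`-free graph a
neighbourhood contains neither a stable triple (a claw) nor a triangle (a `K₄`), so by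
`R(3,3) = 6` it has at most 5 vertices; in particular the graph has at most `3 + 5 + 5`
vertices.
-/

open Finset

namespace SimpleGraph

variable {V : Type*}

def ClawFree (G : SimpleGraph V) : Prop :=
  ¬ ∃ v x y z : V, x ≠ y ∧ x ≠ z ∧ y ≠ z ∧
    G.Adj v x ∧ G.Adj v y ∧ G.Adj v z ∧ ¬ G.Adj x y ∧ ¬ G.Adj x z ∧ ¬ G.Adj y z

variable [DecidableEq V]

lemma exists_isNClique_three_or_compl_of_three_adj (H : SimpleGraph V) {u v w z : V}
    (hv : H.Adj u v) (hw : H.Adj u w) (hz : H.Adj u z) (hvw : v ≠ w) (hvz : v ≠ z)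
    (hwz : w ≠ z) :
    ∃ t ⊆ ({u, v, w, z} : Finset V), H.IsNClique 3 t ∨ Hᶜ.IsNClique 3 t := by
  by_cases evw : H.Adj v w
  · exact ⟨{u, v, w}, by simp [insert_subset_iff], .inl (is3Clique_triple_iff.2 ⟨hv, hw, evw⟩)⟩
  by_cases evz : H.Adj v z
  · exact ⟨{u, v, z}, by simp [insert_subset_iff], .inl (is3Clique_triple_iff.2 ⟨hv, hz, evz⟩)⟩
  by_cases ewz : H.Adj w z
  · exact ⟨{u, w, z}, by simp [insert_subset_iff], .inl (is3Clique_triple_iff.2 ⟨hw, hz, ewz⟩)⟩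
  exact ⟨{v, w, z}, by simp,
    .inr (is3Clique_triple_iff.2 ⟨⟨hvw, evw⟩, ⟨hvz, evz⟩, ⟨hwz, ewz⟩⟩)⟩

/-- `R(3,3) ≤ 6`. -/
theorem exists_isNClique_three_or_compl_of_six_le_card (H : SimpleGraph V) {s : Finset V}
    (hs : 6 ≤ #s) : ∃ t ⊆ s, H.IsNClique 3 t ∨ Hᶜ.IsNClique 3 t := by
  classical
  obtain ⟨u, hu⟩ := s.card_pos.1 (by omega)
  have of_three_le : ∀ K : SimpleGraph V, 3 ≤ #((s.erase u).filter (K.Adj u)) →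
      ∃ t ⊆ s, K.IsNClique 3 t ∨ Kᶜ.IsNClique 3 t := by
    intro K hK
    obtain ⟨t, hts, ht⟩ := exists_subset_card_eq hK
    obtain ⟨v, w, z, hvw, hvz, hwz, rfl⟩ := card_eq_three.1 ht
    have mem : ∀ y ∈ ({v, w, z} : Finset V), y ∈ s ∧ K.Adj u y := fun y hy ↦
      have hy := mem_filter.1 (hts hy)
      ⟨mem_of_mem_erase hy.1, hy.2⟩
    obtain ⟨t, htuvwz, hclique⟩ := exists_isNClique_three_or_compl_of_three_adj K
      (mem v (by simp)).2 (mem w (by simp)).2 (mem z (by simp)).2 hvw hvz hwz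
    refine ⟨t, htuvwz.trans ?_, hclique⟩
    simp only [insert_subset_iff, singleton_subset_iff]
    exact ⟨hu, (mem v (by simp)).1, (mem w (by simp)).1, (mem z (by simp)).1⟩
  have hsplit : #(s.erase u) ≤ #((s.erase u).filter (H.Adj u)) +
      #((s.erase u).filter (Hᶜ.Adj u)) := by
    refine (card_le_card fun y hy ↦ ?_).trans (card_union_le _ _)
    by_cases huy : H.Adj u y <;> simp_all [compl_adj, (ne_of_mem_erase hy).symm]
  rw [card_erase_of_mem hu] at hsplit
  by_cases h3 : 3 ≤ #((s.erase u).filter (H.Adj u))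
  · exact of_three_le H h3
  · obtain ⟨t, hts, ht⟩ := of_three_le Hᶜ
      (by convert (by omega : 3 ≤ #((s.erase u).filter (Hᶜ.Adj u))))
    exact ⟨t, hts, by rwa [compl_compl, or_comm] at ht⟩

lemma ClawFree.not_isNClique_compl_three {G : SimpleGraph V} (hclaw : G.ClawFree) {x : V}
    {t : Finset V} (hx : ∀ u ∈ t, G.Adj x u) : ¬ Gᶜ.IsNClique 3 t := by
  intro ht
  obtain ⟨u, v, w, -, -, -, rfl⟩ := card_eq_three.1 ht.card_eq
  obtain ⟨⟨huv, nuv⟩, ⟨huw, nuw⟩, ⟨hvw, nvw⟩⟩ := is3Clique_triple_iff.1 ht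
  exact hclaw ⟨x, u, v, w, huv, huw, hvw, hx u (by simp), hx v (by simp), hx w (by simp),
    nuv, nuw, nvw⟩

theorem ClawFree.card_le_five_of_forall_adj {G : SimpleGraph V} (hclaw : G.ClawFree)
    (hK4 : G.CliqueFree 4) {x : V} {s : Finset V} (hs : ∀ u ∈ s, G.Adj x u) : #s ≤ 5 := by
  by_contra! h
  obtain ⟨t, hts, ht | ht⟩ := G.exists_isNClique_three_or_compl_of_six_le_card h
  · exact hK4 _ (ht.insert fun u hu ↦ hs u (hts hu))
  · exact hclaw.not_isNClique_compl_three (fun u hu ↦ hs u (hts hu)) ht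

end SimpleGraph

open SimpleGraph

theorem stmt_14_general {V : Type*} [Fintype V] [DecidableEq V]
    (G : SimpleGraph V) [DecidableRel G.Adj]
    (hclaw : ¬ ∃ v x y z : V, x ≠ y ∧ x ≠ z ∧ y ≠ z ∧
      G.Adj v x ∧ G.Adj v y ∧ G.Adj v z ∧ ¬ G.Adj x y ∧ ¬ G.Adj x z ∧ ¬ G.Adj y z)
    (a b c : V)
    (htwo : ∀ v : V, v ∉ ({a, b, c} : Set V) →
      ((G.Adj v a ∧ G.Adj v b ∧ ¬ G.Adj v c) ∨
       (G.Adj v a ∧ ¬ G.Adj v b ∧ G.Adj v c) ∨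
       (¬ G.Adj v a ∧ G.Adj v b ∧ G.Adj v c)))
    (hK4 : G.CliqueFree 4) :
    (∀ x y : V, x ∈ ({a, b, c} : Set V) → y ∈ ({a, b, c} : Set V) → x ≠ y →
      (∀ u v w : V,
        (u ∉ ({a, b, c} : Set V) ∧ G.Adj u x ∧ G.Adj u y) →
        (v ∉ ({a, b, c} : Set V) ∧ G.Adj v x ∧ G.Adj v y) →
        (w ∉ ({a, b, c} : Set V) ∧ G.Adj w x ∧ G.Adj w y) →
        u ≠ v → u ≠ w → v ≠ w →
        ¬ (G.Adj u v ∧ G.Adj u w ∧ G.Adj v w) ∧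
        ¬ (¬ G.Adj u v ∧ ¬ G.Adj u w ∧ ¬ G.Adj v w)) ∧
      (Finset.univ.filter
        (fun u => u ∉ ({a, b, c} : Finset V) ∧ G.Adj u x ∧ G.Adj u y)).card ≤ 5) ∧
    Fintype.card V ≤ 18 := by
  have hclaw : G.ClawFree := hclaw
  have hdeg (x : V) : #(G.neighborFinset x) ≤ 5 :=
    hclaw.card_le_five_of_forall_adj hK4 fun u hu ↦ (mem_neighborFinset G x u).1 hu
  refine ⟨fun x y _ _ _ ↦ ⟨fun u v w hu hv hw huv huw hvw ↦ ⟨?_, ?_⟩, ?_⟩, ?_⟩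
  · rintro ⟨euv, euw, evw⟩
    refine hK4 _ ((is3Clique_triple_iff.2 ⟨euv, euw, evw⟩).insert (a := x) ?_)
    simp [hu.2.1.symm, hv.2.1.symm, hw.2.1.symm]
  · rintro ⟨nuv, nuw, nvw⟩
    exact hclaw ⟨x, u, v, w, huv, huw, hvw, hu.2.1.symm, hv.2.1.symm, hw.2.1.symm, nuv, nuw, nvw⟩
  · exact hclaw.card_le_five_of_forall_adj hK4 fun u hu ↦ (mem_filter.1 hu).2.2.1.symm
  -- a vertex outside `{a, b, c}` is adjacent to two of them, hence to `a` or `b`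
  have hcover : (univ : Finset V) ⊆ {a, b, c} ∪ G.neighborFinset a ∪ G.neighborFinset b := by
    intro v _
    rw [mem_union, mem_union]
    by_cases hv : v ∈ ({a, b, c} : Finset V)
    · exact .inl (.inl hv)
    have hv' : v ∉ ({a, b, c} : Set V) := by simpa using hv
    rcases htwo v hv' with ⟨hva, -⟩ | ⟨hva, -⟩ | ⟨-, hvb, -⟩
    · exact .inl (.inr ((mem_neighborFinset G a v).2 hva.symm))
    · exact .inl (.inr ((mem_neighborFinset G a v).2 hva.symm))
    · exact .inr ((mem_neighborFinset G b v).2 hvb.symm)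
  calc Fintype.card V ≤ #({a, b, c} ∪ G.neighborFinset a ∪ G.neighborFinset b) :=
        card_le_card hcover
    _ ≤ #{a, b, c} + #(G.neighborFinset a) + #(G.neighborFinset b) :=
        (card_union_le _ _).trans (Nat.add_le_add_right (card_union_le _ _) _)
    _ ≤ 18 := by grind [card_le_three, hdeg a, hdeg b]

/-- In a peculiar (claw, co-diamond, K₄)-free graph, each set `S_{x,y}`
contains neither a triangle nor a stable set of size 3, hence has at most 5
vertices, and the whole graph has at most 18 vertices. -/
theorem stmt_14 {V : Type*} [Fintype V] [DecidableEq V]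
    (G : SimpleGraph V) [DecidableRel G.Adj]
    (hconn : G.Connected)
    (hclaw : ¬ ∃ v x y z : V, x ≠ y ∧ x ≠ z ∧ y ≠ z ∧
      G.Adj v x ∧ G.Adj v y ∧ G.Adj v z ∧ ¬ G.Adj x y ∧ ¬ G.Adj x z ∧ ¬ G.Adj y z)
    (hcd : ¬ ∃ w x y z : V, w ≠ x ∧ w ≠ y ∧ w ≠ z ∧ x ≠ y ∧ x ≠ z ∧ y ≠ z ∧
      G.Adj w x ∧ ¬ G.Adj w y ∧ ¬ G.Adj w z ∧ ¬ G.Adj x y ∧ ¬ G.Adj x z ∧ ¬ G.Adj y z)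
    (a b c : V) (hab : a ≠ b) (hac : a ≠ c) (hbc : b ≠ c)
    (hnab : ¬ G.Adj a b) (hnac : ¬ G.Adj a c) (hnbc : ¬ G.Adj b c)
    (htwo : ∀ v : V, v ∉ ({a, b, c} : Set V) →
      ((G.Adj v a ∧ G.Adj v b ∧ ¬ G.Adj v c) ∨
       (G.Adj v a ∧ ¬ G.Adj v b ∧ G.Adj v c) ∨
       (¬ G.Adj v a ∧ G.Adj v b ∧ G.Adj v c)))
    (hK4 : G.CliqueFree 4) :
    (∀ x y : V, x ∈ ({a, b, c} : Set V) → y ∈ ({a, b, c} : Set V) → x ≠ y →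
      (∀ u v w : V,
        (u ∉ ({a, b, c} : Set V) ∧ G.Adj u x ∧ G.Adj u y) →
        (v ∉ ({a, b, c} : Set V) ∧ G.Adj v x ∧ G.Adj v y) →
        (w ∉ ({a, b, c} : Set V) ∧ G.Adj w x ∧ G.Adj w y) →
        u ≠ v → u ≠ w → v ≠ w →
        ¬ (G.Adj u v ∧ G.Adj u w ∧ G.Adj v w) ∧
        ¬ (¬ G.Adj u v ∧ ¬ G.Adj u w ∧ ¬ G.Adj v w)) ∧
      (Finset.univ.filter
        (fun u => u ∉ ({a, b, c} : Finset V) ∧ G.Adj u x ∧ G.Adj u y)).card ≤ 5) ∧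
    Fintype.card V ≤ 18 :=
  stmt_14_general G hclaw a b c htwo hK4
end
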